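/- arXiv:2009.10009 — 2 statements merged into one kernel-verified Lean document; each statement's English description precedes it below -/
import Mathlib

section
/- Under the saturation assumption, each of the five functions of δ given by A_1(δ)=∑_{I∈𝕀̄*}Ē_I, A_2(δ)=1+∑_{I∈𝕀}T_I, B_1(δ)=∑_{I∈𝕀*}E_I, B_2(δ)=1+∑_{I∈𝕀̄}T̄_I, and C_1(δ)=∑_{I∈𝕀^{−*}}E_I (all evaluated at α(δ)) can be written on (0,δ̄] as a quotient P(δ)/Q(δ) of real polynomials with Q(δ)≠0 for all δ∈(0,δ̄] and with constant coefficient P(0) > 0. -/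
open Classical Finset

noncomputable section

def nbr {V : Type} [Fintype V] (G : SimpleGraph V) (S : Finset V) : Finset V :=
  Finset.univ.filter fun j => ∃ i ∈ S, G.Adj i j

def aSum {V : Type} (α : V → ℝ) (S : Finset V) : ℝ := ∑ i ∈ S, α i

def IsIndep {V : Type} (G : SimpleGraph V) (I : Finset V) : Prop :=
  I.Nonempty ∧ ∀ i ∈ I, ∀ j ∈ I, ¬ G.Adj i j

def indepSets {V : Type} [Fintype V] (G : SimpleGraph V) : Finset (Finset V) :=
  Finset.univ.filter fun I => IsIndep G I

def Ncond {V : Type} [Fintype V] (G : SimpleGraph V) (α : V → ℝ) : Prop :=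
  ∀ I ∈ indepSets G, aSum α I < aSum α (nbr G I)

def Tlist {V : Type} [Fintype V] [DecidableEq V] (G : SimpleGraph V) (α : V → ℝ) :
    List V → Finset V → ℝ
  | [], _ => 1
  | i :: l, P =>
      α i / (aSum α (nbr G (insert i P)) - aSum α (insert i P)) * Tlist G α l (insert i P)

def Erat {V : Type} [Fintype V] [DecidableEq V] (G : SimpleGraph V) (α : V → ℝ) :
    List V → Finset V → ℝ
  | [], _ => 0
  | i :: l, P =>
      aSum α (nbr G (insert i P)) / (aSum α (nbr G (insert i P)) - aSum α (insert i P)) +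
        Erat G α l (insert i P)

def TI {V : Type} [Fintype V] [DecidableEq V] (G : SimpleGraph V) (α : V → ℝ) (I : Finset V) : ℝ :=
  ∑ l ∈ I.toList.permutations.toFinset, Tlist G α l ∅

def EI {V : Type} [Fintype V] [DecidableEq V] (G : SimpleGraph V) (α : V → ℝ) (I : Finset V) : ℝ :=
  ∑ l ∈ I.toList.permutations.toFinset, Erat G α l ∅ * Tlist G α l ∅

def meanQ {V : Type} [Fintype V] [DecidableEq V] (G : SimpleGraph V) (α : V → ℝ) : ℝ :=
  (1 + ∑ I ∈ indepSets G, TI G α I)⁻¹ * ∑ I ∈ indepSets G, EI G α I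

def IsWord {V : Type} (G : SimpleGraph V) (w : List V) : Prop :=
  w.Pairwise fun a b => ¬ G.Adj a b

def piHatAux {V : Type} [Fintype V] [DecidableEq V] (G : SimpleGraph V) (α : V → ℝ) :
    List V → Finset V → ℝ
  | [], _ => 1
  | i :: l, P => α i / aSum α (nbr G (insert i P)) * piHatAux G α l (insert i P)

def piHat {V : Type} [Fintype V] [DecidableEq V] (G : SimpleGraph V) (α : V → ℝ) (w : List V) : ℝ :=
  piHatAux G α w ∅

def addEdge {V : Type} (G : SimpleGraph V) (u v : V) : SimpleGraph V :=
  G ⊔ SimpleGraph.fromEdgeSet {s(u, v)}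

end

def RatPosCst (db : ℝ) (F : ℝ → ℝ) : Prop :=
  ∃ P Q : Polynomial ℝ, 0 < P.coeff 0 ∧
    ∀ x : ℝ, 0 < x → x ≤ db → Q.eval x ≠ 0 ∧ F x = P.eval x / Q.eval x

/-!
Each of the five functions is assembled from the affine coordinates `a i + b i * δ` by sums,
products and quotients whose denominators `|α_{E(J)}| - |α_J|` are positive on `(0, δ̄]` by Ncond,
so it is a quotient of polynomials there. It is moreover bounded below on `(0, δ̄]` by a positive
constant: the `T`-sums by `1`, and an `E`-sum by `α_v(δ) ≥ min (a v) (α_v(δ̄))` as soon as its index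
set contains a singleton `{v}` (take `v = i*` for `𝕀*` and `𝕀̄*`, and a neighbour of `i*` in `G` for
`𝕀^{-*}`). Finally, a quotient of polynomials bounded below by `c > 0` on `(0, δ̄]` can be
written with a numerator whose constant coefficient is positive: writing it as
`x^k P₁(x) / (x^m Q₁(x))` with `P₁(0) Q₁(0) ≠ 0`, the lower bound forces `k ≤ m` and
`P₁(0) Q₁(0) > 0`, so `P₁ Q₁ / (X^(m-k) Q₁²)` does it.
-/

open Polynomial

def IsRationalOn (s : Set ℝ) (f : ℝ → ℝ) : Prop :=
  ∃ P Q : ℝ[X], ∀ x ∈ s, Q.eval x ≠ 0 ∧ f x = P.eval x / Q.eval x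

namespace IsRationalOn

theorem polynomial (s : Set ℝ) (p : ℝ[X]) : IsRationalOn s fun x => p.eval x :=
  ⟨p, 1, fun x _ => ⟨by simp, by simp⟩⟩

theorem const (s : Set ℝ) (c : ℝ) : IsRationalOn s fun _ => c := by
  simpa using polynomial s (C c)

variable {s : Set ℝ} {f g : ℝ → ℝ}

theorem add (hf : IsRationalOn s f) (hg : IsRationalOn s g) :
    IsRationalOn s fun x => f x + g x := by
  obtain ⟨P₁, Q₁, h₁⟩ := hf
  obtain ⟨P₂, Q₂, h₂⟩ := hg
  refine ⟨P₁ * Q₂ + Q₁ * P₂, Q₁ * Q₂, fun x hx => ?_⟩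
  obtain ⟨hQ₁, hf⟩ := h₁ x hx
  obtain ⟨hQ₂, hg⟩ := h₂ x hx
  refine ⟨by simp [hQ₁, hQ₂], ?_⟩
  show f x + g x = _
  rw [hf, hg, div_add_div _ _ hQ₁ hQ₂]
  simp

theorem sub (hf : IsRationalOn s f) (hg : IsRationalOn s g) :
    IsRationalOn s fun x => f x - g x := by
  obtain ⟨P₁, Q₁, h₁⟩ := hf
  obtain ⟨P₂, Q₂, h₂⟩ := hg
  refine ⟨P₁ * Q₂ - Q₁ * P₂, Q₁ * Q₂, fun x hx => ?_⟩
  obtain ⟨hQ₁, hf⟩ := h₁ x hx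
  obtain ⟨hQ₂, hg⟩ := h₂ x hx
  refine ⟨by simp [hQ₁, hQ₂], ?_⟩
  show f x - g x = _
  rw [hf, hg, div_sub_div _ _ hQ₁ hQ₂]
  simp

theorem mul (hf : IsRationalOn s f) (hg : IsRationalOn s g) :
    IsRationalOn s fun x => f x * g x := by
  obtain ⟨P₁, Q₁, h₁⟩ := hf
  obtain ⟨P₂, Q₂, h₂⟩ := hg
  refine ⟨P₁ * P₂, Q₁ * Q₂, fun x hx => ?_⟩
  obtain ⟨hQ₁, hf⟩ := h₁ x hx
  obtain ⟨hQ₂, hg⟩ := h₂ x hx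
  refine ⟨by simp [hQ₁, hQ₂], ?_⟩
  show f x * g x = _
  rw [hf, hg, div_mul_div_comm]
  simp

theorem div (hf : IsRationalOn s f) (hg : IsRationalOn s g) (hg₀ : ∀ x ∈ s, g x ≠ 0) :
    IsRationalOn s fun x => f x / g x := by
  obtain ⟨P₁, Q₁, h₁⟩ := hf
  obtain ⟨P₂, Q₂, h₂⟩ := hg
  refine ⟨P₁ * Q₂, Q₁ * P₂, fun x hx => ?_⟩
  obtain ⟨hQ₁, hf⟩ := h₁ x hx
  obtain ⟨hQ₂, hg⟩ := h₂ x hx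
  have hP₂ : P₂.eval x ≠ 0 := fun h => hg₀ x hx (by rw [hg, h, zero_div])
  refine ⟨by simp [hQ₁, hP₂], ?_⟩
  show f x / g x = _
  rw [hf, hg, div_div_div_eq]
  simp

theorem sum {ι : Type*} (S : Finset ι) {F : ι → ℝ → ℝ} (hF : ∀ i ∈ S, IsRationalOn s (F i)) :
    IsRationalOn s fun x => ∑ i ∈ S, F i x := by
  induction S using Finset.cons_induction with
  | empty => simpa using const s 0
  | cons i S hi ih =>
    simp only [Finset.sum_cons]
    exact (hF i (Finset.mem_cons_self i S)).add (ih fun j hj => hF j (Finset.mem_cons_of_mem hj))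

end IsRationalOn

theorem Polynomial.exists_eq_X_pow_mul_eval_zero_ne {R : Type*} [CommRing R] {p : R[X]}
    (hp : p ≠ 0) : ∃ (k : ℕ) (q : R[X]), p = X ^ k * q ∧ q.eval 0 ≠ 0 := by
  obtain ⟨q, hpq, hq⟩ := exists_eq_pow_rootMultiplicity_mul_and_not_dvd p hp 0
  rw [map_zero, sub_zero] at hpq hq
  exact ⟨_, q, hpq, by rwa [← coeff_zero_eq_eval_zero, Ne, ← X_dvd_iff]⟩

theorem Polynomial.eval_zero_le_of_forall_Ioc {p q : ℝ[X]} {db : ℝ} (hdb : 0 < db)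
    (h : ∀ x ∈ Set.Ioc 0 db, p.eval x ≤ q.eval x) : p.eval 0 ≤ q.eval 0 := by
  have hIcc : Set.Icc 0 db ⊆ {x | p.eval x ≤ q.eval x} := by
    rw [← closure_Ioc hdb.ne]
    exact (isClosed_le p.continuous q.continuous).closure_subset_iff.2 h
  exact hIcc ⟨le_rfl, hdb.le⟩

theorem Polynomial.eval_zero_nonneg_of_forall_Ioc {p : ℝ[X]} {db : ℝ} {k : ℕ} (hdb : 0 < db)
    (h : ∀ x ∈ Set.Ioc 0 db, 0 ≤ x ^ k * p.eval x) : 0 ≤ p.eval 0 := by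
  simpa using eval_zero_le_of_forall_Ioc (p := 0) (q := p) hdb fun x hx => by
    simpa using nonneg_of_mul_nonneg_right (h x hx) (pow_pos hx.1 k)

theorem Polynomial.le_of_forall_Ioc_X_pow_mul_le {p q : ℝ[X]} {db c : ℝ} {k m : ℕ}
    (hdb : 0 < db) (hq : 0 < c * q.eval 0)
    (h : ∀ x ∈ Set.Ioc 0 db, c * x ^ m * q.eval x ≤ x ^ k * p.eval x) : k ≤ m := by
  by_contra! hmk
  obtain ⟨d, rfl⟩ := Nat.exists_eq_add_of_lt hmk
  have h0 := eval_zero_le_of_forall_Ioc (p := C c * q) (q := X ^ (d + 1) * p) hdb fun x hx => by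
    simp only [eval_mul, eval_pow, eval_X, eval_C]
    refine le_of_mul_le_mul_left ?_ (pow_pos hx.1 m)
    calc x ^ m * (c * q.eval x) = c * x ^ m * q.eval x := by ring
      _ ≤ x ^ (m + d + 1) * p.eval x := h x hx
      _ = x ^ m * (x ^ (d + 1) * p.eval x) := by ring
  simp only [eval_mul, eval_pow, eval_X, eval_C, zero_pow (Nat.succ_ne_zero d), zero_mul] at h0
  linarith

theorem ratPosCst_of_le {db c : ℝ} {F : ℝ → ℝ} (hdb : 0 < db) (hc : 0 < c)
    (hF : IsRationalOn (Set.Ioc 0 db) F) (hcF : ∀ x ∈ Set.Ioc 0 db, c ≤ F x) :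
    RatPosCst db F := by
  obtain ⟨P, Q, hPQ⟩ := hF
  have hdb' : db ∈ Set.Ioc 0 db := ⟨hdb, le_rfl⟩
  have hQ : Q ≠ 0 := by
    rintro rfl
    exact (hPQ db hdb').1 eval_zero
  have hP : P ≠ 0 := by
    rintro rfl
    have := hcF db hdb'
    rw [(hPQ db hdb').2, eval_zero, zero_div] at this
    linarith
  obtain ⟨k, P₁, rfl, hP₁⟩ := exists_eq_X_pow_mul_eval_zero_ne hP
  obtain ⟨m, Q₁, rfl, hQ₁⟩ := exists_eq_X_pow_mul_eval_zero_ne hQ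
  -- `c ≤ F x` multiplied by `(x ^ m * Q₁(x)) ^ 2 / x ^ m > 0`
  have key : ∀ x ∈ Set.Ioc 0 db, c * x ^ m * (Q₁ ^ 2).eval x ≤ x ^ k * (P₁ * Q₁).eval x := by
    intro x hx
    obtain ⟨hQx, hFx⟩ := hPQ x hx
    simp only [eval_mul, eval_pow, eval_X] at hQx hFx ⊢
    refine le_of_mul_le_mul_left ?_ (pow_pos hx.1 m)
    calc x ^ m * (c * x ^ m * Q₁.eval x ^ 2) = c * (x ^ m * Q₁.eval x) ^ 2 := by ring
      _ ≤ F x * (x ^ m * Q₁.eval x) ^ 2 := mul_le_mul_of_nonneg_right (hcF x hx) (sq_nonneg _)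
      _ = x ^ m * (x ^ k * (P₁.eval x * Q₁.eval x)) := by rw [hFx]; field_simp
  obtain ⟨d, rfl⟩ := Nat.exists_eq_add_of_le <|
    le_of_forall_Ioc_X_pow_mul_le hdb (by simpa using mul_pos hc (sq_pos_of_ne_zero hQ₁)) key
  have hPQ₁ : 0 < (P₁ * Q₁).eval 0 := by
    have hne : (P₁ * Q₁).eval 0 ≠ 0 := by simp [hP₁, hQ₁]
    refine lt_of_le_of_ne (eval_zero_nonneg_of_forall_Ioc (k := k) hdb fun x hx => ?_) hne.symm
    refine le_trans ?_ (key x hx)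
    rw [eval_pow]
    have := hx.1
    positivity
  refine ⟨P₁ * Q₁, X ^ d * Q₁ ^ 2, by rwa [coeff_zero_eq_eval_zero], fun x hx0 hxdb => ?_⟩
  obtain ⟨hQx, hFx⟩ := hPQ x ⟨hx0, hxdb⟩
  simp only [eval_mul, eval_pow, eval_X] at hQx hFx ⊢
  have hQ₁x : Q₁.eval x ≠ 0 := right_ne_zero_of_mul hQx
  refine ⟨by simp [hx0.ne', hQ₁x], ?_⟩
  rw [hFx, pow_add]
  field_simp

section Graph

variable {V : Type} {G H : SimpleGraph V}

theorem IsIndep.subset {I J : Finset V} (hI : IsIndep G I) (hJI : J ⊆ I) (hJ : J.Nonempty) :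
    IsIndep G J :=
  ⟨hJ, fun i hi j hj => hI.2 i (hJI hi) j (hJI hj)⟩

theorem mem_of_mem_permutations_toList [DecidableEq V] {I : Finset V} {l : List V}
    (hl : l ∈ I.toList.permutations.toFinset) : ∀ i ∈ l, i ∈ I := by
  rw [List.mem_toFinset, List.mem_permutations] at hl
  intro i hi
  exact Finset.mem_toList.1 (hl.mem_iff.1 hi)

variable [Fintype V]

theorem singleton_mem_indepSets (G : SimpleGraph V) (v : V) : {v} ∈ indepSets G := by
  simp only [indepSets, Finset.mem_filter, Finset.mem_univ, true_and]
  refine ⟨Finset.singleton_nonempty v, fun i hi j hj => ?_⟩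
  rw [Finset.mem_singleton] at hi hj
  subst hi hj
  exact G.irrefl

theorem indepSets_anti (hGH : G ≤ H) : indepSets H ⊆ indepSets G := by
  intro I hI
  simp only [indepSets, Finset.mem_filter, Finset.mem_univ, true_and] at hI ⊢
  exact ⟨hI.1, fun i hi j hj hij => hI.2 i hi j hj (hGH hij)⟩

theorem nbr_mono (hGH : G ≤ H) (S : Finset V) : nbr G S ⊆ nbr H S := by
  intro j hj
  simp only [nbr, Finset.mem_filter, Finset.mem_univ, true_and] at hj ⊢
  obtain ⟨i, hi, hij⟩ := hj
  exact ⟨i, hi, hGH hij⟩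

variable {α : V → ℝ}

theorem Ncond.mono (hGH : G ≤ H) (hα : ∀ i, 0 ≤ α i) (hN : Ncond G α) : Ncond H α :=
  fun I hI => (hN I (indepSets_anti hGH hI)).trans_le
    (Finset.sum_le_sum_of_subset_of_nonneg (nbr_mono hGH I) fun i _ _ => hα i)

theorem Ncond.exists_adj (hα : ∀ i, 0 ≤ α i) (hN : Ncond G α) (v : V) : ∃ u, G.Adj v u := by
  by_contra! h
  have hnbr : nbr G {v} = ∅ := by simp [nbr, h]
  have := hN _ (singleton_mem_indepSets G v)
  simp only [aSum, hnbr, Finset.sum_empty, Finset.sum_singleton] at this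
  linarith [hα v]

variable [DecidableEq V]

theorem insert_mem_indepSets {I P : Finset V} {i : V} (hI : I ∈ indepSets G) (hP : P ⊆ I)
    (hi : i ∈ I) : insert i P ∈ indepSets G := by
  simp only [indepSets, Finset.mem_filter, Finset.mem_univ, true_and] at hI ⊢
  exact hI.subset (Finset.insert_subset hi hP) (Finset.insert_nonempty i P)

theorem Tlist_nonneg (hα : ∀ i, 0 ≤ α i) (hN : Ncond G α) {I : Finset V}
    (hI : I ∈ indepSets G) :
    ∀ (l : List V) {P : Finset V}, P ⊆ I → (∀ i ∈ l, i ∈ I) → 0 ≤ Tlist G α l P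
  | [], _, _, _ => zero_le_one
  | i :: l, P, hP, hl => by
    rw [List.forall_mem_cons] at hl
    have hD := sub_pos.2 (hN _ (insert_mem_indepSets hI hP hl.1))
    exact mul_nonneg (div_nonneg (hα i) hD.le)
      (Tlist_nonneg hα hN hI l (Finset.insert_subset hl.1 hP) hl.2)

theorem Erat_nonneg (hα : ∀ i, 0 ≤ α i) (hN : Ncond G α) {I : Finset V}
    (hI : I ∈ indepSets G) :
    ∀ (l : List V) {P : Finset V}, P ⊆ I → (∀ i ∈ l, i ∈ I) → 0 ≤ Erat G α l P
  | [], _, _, _ => le_rfl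
  | i :: l, P, hP, hl => by
    rw [List.forall_mem_cons] at hl
    have hD := sub_pos.2 (hN _ (insert_mem_indepSets hI hP hl.1))
    exact add_nonneg (div_nonneg (Finset.sum_nonneg fun j _ => hα j) hD.le)
      (Erat_nonneg hα hN hI l (Finset.insert_subset hl.1 hP) hl.2)

theorem TI_nonneg (hα : ∀ i, 0 ≤ α i) (hN : Ncond G α) {I : Finset V}
    (hI : I ∈ indepSets G) : 0 ≤ TI G α I :=
  Finset.sum_nonneg fun l hl =>
    Tlist_nonneg hα hN hI l (Finset.empty_subset I) (mem_of_mem_permutations_toList hl)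

theorem EI_nonneg (hα : ∀ i, 0 ≤ α i) (hN : Ncond G α) {I : Finset V}
    (hI : I ∈ indepSets G) : 0 ≤ EI G α I :=
  Finset.sum_nonneg fun l hl =>
    have hl' := mem_of_mem_permutations_toList hl
    mul_nonneg (Erat_nonneg hα hN hI l (Finset.empty_subset I) hl')
      (Tlist_nonneg hα hN hI l (Finset.empty_subset I) hl')

theorem EI_singleton (G : SimpleGraph V) (α : V → ℝ) (v : V) :
    EI G α {v} = aSum α (nbr G {v}) / (aSum α (nbr G {v}) - α v) *
      (α v / (aSum α (nbr G {v}) - α v)) := by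
  simp [EI, Erat, Tlist, aSum, List.permutations]

theorem le_EI_singleton (hα : ∀ i, 0 ≤ α i) (hα₁ : ∑ i, α i ≤ 1) (hN : Ncond G α) (v : V) :
    α v ≤ EI G α {v} := by
  have hD : α v < aSum α (nbr G {v}) := by
    simpa [aSum] using hN _ (singleton_mem_indepSets G v)
  have hnbr : aSum α (nbr G {v}) ≤ 1 :=
    (Finset.sum_le_sum_of_subset_of_nonneg (Finset.subset_univ _) fun i _ _ => hα i).trans hα₁
  rw [EI_singleton]
  calc α v = 1 * α v := (one_mul _).symm
    _ ≤ _ :=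
      mul_le_mul ((one_le_div (by linarith)).2 (by linarith [hα v]))
        (le_div_self (hα v) (by linarith) (by linarith [hα v])) (hα v)
          (div_nonneg (by linarith [hα v]) (by linarith))

end Graph

section Rational

variable {V : Type} {s : Set ℝ} {α : ℝ → V → ℝ}

theorem isRationalOn_aSum (hα : ∀ i, IsRationalOn s fun x => α x i) (S : Finset V) :
    IsRationalOn s fun x => aSum (α x) S :=
  IsRationalOn.sum S fun i _ => hα i

variable [Fintype V] {G : SimpleGraph V}

theorem isRationalOn_aSum_nbr_sub_aSum (hα : ∀ i, IsRationalOn s fun x => α x i) (S : Finset V) :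
    IsRationalOn s fun x => aSum (α x) (nbr G S) - aSum (α x) S :=
  (isRationalOn_aSum hα _).sub (isRationalOn_aSum hα _)

variable [DecidableEq V] (hα : ∀ i, IsRationalOn s fun x => α x i) (hN : ∀ x ∈ s, Ncond G (α x))
  {I : Finset V} (hI : I ∈ indepSets G)
include hα hN hI

theorem isRationalOn_Tlist :
    ∀ (l : List V) {P : Finset V}, P ⊆ I → (∀ i ∈ l, i ∈ I) →
      IsRationalOn s fun x => Tlist G (α x) l P
  | [], _, _, _ => IsRationalOn.const s 1
  | i :: l, P, hP, hl => by
    rw [List.forall_mem_cons] at hl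
    have hgap := fun x hx => (sub_pos.2 (hN x hx _ (insert_mem_indepSets hI hP hl.1))).ne'
    exact ((hα i).div (isRationalOn_aSum_nbr_sub_aSum hα _) hgap).mul
      (isRationalOn_Tlist l (Finset.insert_subset hl.1 hP) hl.2)

theorem isRationalOn_Erat :
    ∀ (l : List V) {P : Finset V}, P ⊆ I → (∀ i ∈ l, i ∈ I) →
      IsRationalOn s fun x => Erat G (α x) l P
  | [], _, _, _ => IsRationalOn.const s 0
  | i :: l, P, hP, hl => by
    rw [List.forall_mem_cons] at hl
    have hgap := fun x hx => (sub_pos.2 (hN x hx _ (insert_mem_indepSets hI hP hl.1))).ne'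
    exact ((isRationalOn_aSum hα _).div (isRationalOn_aSum_nbr_sub_aSum hα _) hgap).add
      (isRationalOn_Erat l (Finset.insert_subset hl.1 hP) hl.2)

theorem isRationalOn_TI : IsRationalOn s fun x => TI G (α x) I :=
  IsRationalOn.sum _ fun l hl =>
    isRationalOn_Tlist hα hN hI l (Finset.empty_subset I) (mem_of_mem_permutations_toList hl)

theorem isRationalOn_EI : IsRationalOn s fun x => EI G (α x) I :=
  IsRationalOn.sum _ fun l hl =>
    have hl' := mem_of_mem_permutations_toList hl
    (isRationalOn_Erat hα hN hI l (Finset.empty_subset I) hl').mul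
      (isRationalOn_Tlist hα hN hI l (Finset.empty_subset I) hl')

end Rational

section Assembly

variable {V : Type} [Fintype V] [DecidableEq V] {G : SimpleGraph V} {db : ℝ}
  {α : ℝ → V → ℝ} {S : Finset (Finset V)}

theorem ratPosCst_one_add_sum_TI (hdb : 0 < db)
    (hα : ∀ i, IsRationalOn (Set.Ioc 0 db) fun x => α x i)
    (hα₀ : ∀ x ∈ Set.Ioc 0 db, ∀ i, 0 ≤ α x i) (hN : ∀ x ∈ Set.Ioc 0 db, Ncond G (α x))
    (hS : S ⊆ indepSets G) :
    RatPosCst db fun x => 1 + ∑ I ∈ S, TI G (α x) I :=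
  ratPosCst_of_le hdb one_pos
    ((IsRationalOn.const _ 1).add (IsRationalOn.sum S fun _ hI => isRationalOn_TI hα hN (hS hI)))
    fun x hx => le_add_of_nonneg_right
      (Finset.sum_nonneg fun _ hI => TI_nonneg (hα₀ x hx) (hN x hx) (hS hI))

theorem ratPosCst_sum_EI (hdb : 0 < db)
    (hα : ∀ i, IsRationalOn (Set.Ioc 0 db) fun x => α x i)
    (hα₀ : ∀ x ∈ Set.Ioc 0 db, ∀ i, 0 ≤ α x i) (hα₁ : ∀ x ∈ Set.Ioc 0 db, ∑ i, α x i ≤ 1)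
    (hN : ∀ x ∈ Set.Ioc 0 db, Ncond G (α x)) (hS : S ⊆ indepSets G) {v : V} (hv : {v} ∈ S)
    {c : ℝ} (hc : 0 < c) (hcv : ∀ x ∈ Set.Ioc 0 db, c ≤ α x v) :
    RatPosCst db fun x => ∑ I ∈ S, EI G (α x) I :=
  ratPosCst_of_le hdb hc (IsRationalOn.sum S fun _ hI => isRationalOn_EI hα hN (hS hI))
    fun x hx => calc
      c ≤ α x v := hcv x hx
      _ ≤ EI G (α x) {v} := le_EI_singleton (hα₀ x hx) (hα₁ x hx) (hN x hx) v
      _ ≤ ∑ I ∈ S, EI G (α x) I :=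
        Finset.single_le_sum (fun _ hI => EI_nonneg (hα₀ x hx) (hN x hx) (hS hI)) hv

end Assembly

theorem exists_pos_le_affine_on_Ioc {a b db : ℝ} (ha : 0 < a) (hdb : 0 < a + b * db) :
    ∃ c > 0, ∀ x ∈ Set.Ioc 0 db, c ≤ a + b * x := by
  refine ⟨min a (a + b * db), lt_min ha hdb, fun x ⟨hx0, hxdb⟩ => ?_⟩
  rcases le_or_gt 0 b with hb | hb
  · exact (min_le_left _ _).trans (by nlinarith)
  · exact (min_le_right _ _).trans (by nlinarith)

theorem stmt8_general
    {V : Type} [Fintype V] [DecidableEq V] (G : SimpleGraph V)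
    (istar jstar : V) (hnadj : ¬ G.Adj istar jstar)
    (a b : V → ℝ) (δbar : ℝ) (hδbar : 0 < δbar)
    (ha : ∀ i, 0 < a i)
    (hpos : ∀ δ : ℝ, 0 < δ → δ ≤ δbar → ∀ i, 0 < a i + b i * δ)
    (hdist : ∀ δ : ℝ, 0 < δ → δ ≤ δbar → ∑ i, (a i + b i * δ) = 1)
    (hN : ∀ δ : ℝ, 0 < δ → δ ≤ δbar → Ncond G fun i => a i + b i * δ)
 :
    RatPosCst δbar (fun δ =>
        ∑ I ∈ (indepSets (addEdge G istar jstar)).filter (fun I => istar ∈ I ∨ jstar ∈ I),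
          EI (addEdge G istar jstar) (fun i => a i + b i * δ) I) ∧
    RatPosCst δbar (fun δ => 1 + ∑ I ∈ indepSets G, TI G (fun i => a i + b i * δ) I) ∧
    RatPosCst δbar (fun δ =>
        ∑ I ∈ (indepSets G).filter (fun I => istar ∈ I ∨ jstar ∈ I),
          EI G (fun i => a i + b i * δ) I) ∧
    RatPosCst δbar (fun δ =>
        1 + ∑ I ∈ indepSets (addEdge G istar jstar),
          TI (addEdge G istar jstar) (fun i => a i + b i * δ) I) ∧
    RatPosCst δbar (fun δ =>
        ∑ I ∈ (indepSets G).filter (fun I => ¬(istar ∈ I ∨ jstar ∈ I)),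
          EI G (fun i => a i + b i * δ) I) := by
  have hα : ∀ i, IsRationalOn (Set.Ioc 0 δbar) fun x => a i + b i * x := fun i => by
    convert IsRationalOn.polynomial _ (C (a i) + C (b i) * X) using 2
    simp
  have hα₀ : ∀ x ∈ Set.Ioc 0 δbar, ∀ i, 0 ≤ a i + b i * x := fun x hx i =>
    (hpos x hx.1 hx.2 i).le
  have hα₁ : ∀ x ∈ Set.Ioc 0 δbar, ∑ i, (a i + b i * x) ≤ 1 := fun x hx =>
    (hdist x hx.1 hx.2).le
  have hNG : ∀ x ∈ Set.Ioc 0 δbar, Ncond G fun i => a i + b i * x := fun x hx => hN x hx.1 hx.2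
  have hNbar : ∀ x ∈ Set.Ioc 0 δbar, Ncond (addEdge G istar jstar) fun i => a i + b i * x :=
    fun x hx => (hNG x hx).mono le_sup_left (hα₀ x hx)
  have hδbar' : δbar ∈ Set.Ioc 0 δbar := ⟨hδbar, le_rfl⟩
  obtain ⟨u, hu⟩ := (hNG δbar hδbar').exists_adj (hα₀ δbar hδbar') istar
  obtain ⟨c, hc, hci⟩ := exists_pos_le_affine_on_Ioc (ha istar) (hpos δbar hδbar le_rfl istar)
  obtain ⟨c', hc', hcu⟩ := exists_pos_le_affine_on_Ioc (ha u) (hpos δbar hδbar le_rfl u)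
  refine ⟨ratPosCst_sum_EI hδbar hα hα₀ hα₁ hNbar (Finset.filter_subset _ _) ?_ hc hci,
    ratPosCst_one_add_sum_TI hδbar hα hα₀ hNG subset_rfl,
    ratPosCst_sum_EI hδbar hα hα₀ hα₁ hNG (Finset.filter_subset _ _) ?_ hc hci,
    ratPosCst_one_add_sum_TI hδbar hα hα₀ hNbar subset_rfl,
    ratPosCst_sum_EI hδbar hα hα₀ hα₁ hNG (Finset.filter_subset _ _) ?_ hc' hcu⟩
  · simp [singleton_mem_indepSets]
  · simp [singleton_mem_indepSets]
  · have hju : jstar ≠ u := by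
      rintro rfl
      exact hnadj hu
    simp [singleton_mem_indepSets, hu.ne, hju]

theorem stmt8
    {V : Type} [Fintype V] [DecidableEq V] (G : SimpleGraph V)
    (istar jstar : V) (hne : istar ≠ jstar) (hnadj : ¬ G.Adj istar jstar)
    (a b : V → ℝ) (δbar : ℝ) (hδbar : 0 < δbar)
    (ha : ∀ i, 0 < a i)
    (hpos : ∀ δ : ℝ, 0 < δ → δ ≤ δbar → ∀ i, 0 < a i + b i * δ)
    (hdist : ∀ δ : ℝ, 0 < δ → δ ≤ δbar → ∑ i, (a i + b i * δ) = 1)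
    (hN : ∀ δ : ℝ, 0 < δ → δ ≤ δbar → Ncond G fun i => a i + b i * δ)
    (Ihat : Finset V) (hIhat : Ihat ∈ indepSets G)
    (hsat : aSum a (nbr G Ihat) = aSum a Ihat)
    (huniq : ∀ J ∈ indepSets G, aSum a (nbr G J) = aSum a J → J = Ihat)
 :
    RatPosCst δbar (fun δ =>
        ∑ I ∈ (indepSets (addEdge G istar jstar)).filter (fun I => istar ∈ I ∨ jstar ∈ I),
          EI (addEdge G istar jstar) (fun i => a i + b i * δ) I) ∧
    RatPosCst δbar (fun δ => 1 + ∑ I ∈ indepSets G, TI G (fun i => a i + b i * δ) I) ∧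
    RatPosCst δbar (fun δ =>
        ∑ I ∈ (indepSets G).filter (fun I => istar ∈ I ∨ jstar ∈ I),
          EI G (fun i => a i + b i * δ) I) ∧
    RatPosCst δbar (fun δ =>
        1 + ∑ I ∈ indepSets (addEdge G istar jstar),
          TI (addEdge G istar jstar) (fun i => a i + b i * δ) I) ∧
    RatPosCst δbar (fun δ =>
        ∑ I ∈ (indepSets G).filter (fun I => ¬(istar ∈ I ∨ jstar ∈ I)),
          EI G (fun i => a i + b i * δ) I) :=
  stmt8_general G istar jstar hnadj a b δbar hδbar ha hpos hdist hN
end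

section
/- If α (a vector of positive reals indexed by V) satisfies Ncond for the aggregated matching graph G_x, then the mean populations of the two models coincide: Q(G_yz, β) = Q(G_x, α). -/
open Classical Finset

def psiMap {V : Type} (x : V) : V ⊕ Unit → V := Sum.elim id fun _ => x

def Gyz {V : Type} (G : SimpleGraph V) (x : V) : SimpleGraph (V ⊕ Unit) :=
  SimpleGraph.comap (psiMap x) G

noncomputable def betaArr {V : Type} [DecidableEq V] (α : V → ℝ) (x : V) (by_ bz : ℝ) :
    V ⊕ Unit → ℝ :=
  Sum.elim (fun v => if v = x then by_ else α v) fun _ => bz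

/-!
A state of the model is the independent set `P` of classes waiting in the queue. The constant
`1 + ∑ T_I` and the numerator `∑ E_I` of `meanQ` are the values at `P = ∅` of two functions of the
state, `sumTFrom` and `sumEFrom`, which satisfy a one-step recursion over the classes that can
join `P` (peel off the first letter of each enumeration).

Splitting `x` into `y` and `z` pulls the graph back along a map `f : W → V` whose rates `β` sum to
`α` over every fibre. A state `S` upstairs differs from its image `P = f S` only through the
defect `δ = |α_P| - |β_S| ≥ 0` of the partially present fibres, and induction on the number of
classes that can join gives, with `s = |α_{E(P)}| - |α_P| > 0` by `Ncond` and primes marking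
the pulled-back graph,
  `sumTFrom' S = (1 + δ / s) sumTFrom P`,
  `sumEFrom' S = (1 + δ / s) sumEFrom P + δ |α_{E(P)}| / s² sumTFrom P`.
At `S = ∅` the defect vanishes, so the two mean populations agree.
-/

section Permutations

variable {W M : Type*} [DecidableEq W] [AddCommMonoid M]

lemma mem_permutations_toList {I : Finset W} {l : List W} :
    l ∈ I.toList.permutations.toFinset ↔ (l : Multiset W) = I.val := by
  rw [List.mem_toFinset, List.mem_permutations, ← I.coe_toList, Multiset.coe_eq_coe]

lemma permutations_toList_eq_biUnion {I : Finset W} (hI : I.Nonempty) :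
    I.toList.permutations.toFinset =
      I.biUnion fun i => ((I.erase i).toList.permutations.toFinset).image (i :: ·) := by
  ext l
  simp only [mem_permutations_toList, mem_biUnion, mem_image, erase_val]
  constructor
  · intro h
    obtain _ | ⟨i, t⟩ := l
    · exact absurd (val_eq_zero.1 h.symm) hI.ne_empty
    · have hi : i ∈ I := by simp [← mem_val, ← h]
      refine ⟨i, hi, t, ?_, rfl⟩
      rw [← h, ← Multiset.cons_coe, Multiset.erase_cons_head]
  · rintro ⟨i, hi, t, ht, rfl⟩
    rw [← Multiset.cons_coe, ht, Multiset.cons_erase hi]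

lemma sum_permutations_eq_sum_cons (f : List W → M) {I : Finset W} (hI : I.Nonempty) :
    ∑ l ∈ I.toList.permutations.toFinset, f l
      = ∑ i ∈ I, ∑ t ∈ (I.erase i).toList.permutations.toFinset, f (i :: t) := by
  rw [permutations_toList_eq_biUnion hI, sum_biUnion]
  · exact sum_congr rfl fun i _ => sum_image fun _ _ _ _ h => List.cons_injective h
  · intro i _ j _ hij
    simp only [Function.onFun, disjoint_left, mem_image]
    rintro _ ⟨_, _, rfl⟩ ⟨_, _, h⟩
    exact hij (List.cons_eq_cons.1 h).1.symm

end Permutations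

lemma isIndep_iff {V : Type} {G : SimpleGraph V} {I : Finset V} :
    IsIndep G I ↔ I.Nonempty ∧ G.IsIndepSet (I : Set V) :=
  and_congr_right fun _ => ⟨fun h _ hi _ hj _ => h _ hi _ hj,
    fun h _ hi _ hj hij => h hi hj (G.ne_of_adj hij) hij⟩

noncomputable section States

variable {W : Type} [Fintype W] [DecidableEq W]

def addable (H : SimpleGraph W) (P : Finset W) : Finset W := univ \ (P ∪ nbr H P)

def indepExts (H : SimpleGraph W) (P : Finset W) : Finset (Finset W) :=
  (addable H P).powerset.filter fun I => H.IsIndepSet (I : Set W)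

def slack (H : SimpleGraph W) (w : W → ℝ) (P : Finset W) : ℝ := aSum w (nbr H P) - aSum w P

def sumTFrom (H : SimpleGraph W) (w : W → ℝ) (P : Finset W) : ℝ :=
  ∑ I ∈ indepExts H P, ∑ l ∈ I.toList.permutations.toFinset, Tlist H w l P

def sumEFrom (H : SimpleGraph W) (w : W → ℝ) (P : Finset W) : ℝ :=
  ∑ I ∈ indepExts H P, ∑ l ∈ I.toList.permutations.toFinset, Erat H w l P * Tlist H w l P

omit [DecidableEq W] in
lemma mem_nbr {H : SimpleGraph W} {S : Finset W} {j : W} : j ∈ nbr H S ↔ ∃ i ∈ S, H.Adj i j := by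
  simp [nbr]

lemma mem_addable {H : SimpleGraph W} {P : Finset W} {j : W} :
    j ∈ addable H P ↔ j ∉ P ∧ j ∉ nbr H P := by
  simp [addable]

lemma mem_indepExts {H : SimpleGraph W} {P I : Finset W} :
    I ∈ indepExts H P ↔ I ⊆ addable H P ∧ H.IsIndepSet (I : Set W) := by
  simp [indepExts]

lemma insert_mem_indepExts_iff {H : SimpleGraph W} {P J : Finset W} {i : W} (hi : i ∉ J) :
    insert i J ∈ indepExts H P ↔ i ∈ addable H P ∧ J ∈ indepExts H (insert i P) := by
  simp only [mem_indepExts, coe_insert, Set.pairwise_insert, mem_addable, mem_nbr, mem_insert,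
    mem_coe, subset_iff]
  grind [SimpleGraph.adj_comm]

lemma notMem_of_mem_indepExts_insert {H : SimpleGraph W} {P J : Finset W} {i : W}
    (hJ : J ∈ indepExts H (insert i P)) : i ∉ J := fun hi =>
  (mem_addable.1 ((mem_indepExts.1 hJ).1 hi)).1 (mem_insert_self i P)

lemma card_addable_insert_lt {H : SimpleGraph W} {P : Finset W} {j : W} (hj : j ∈ addable H P) :
    (addable H (insert j P)).card < (addable H P).card := by
  refine card_lt_card ((ssubset_iff_of_subset fun k hk => ?_).2 ⟨j, hj, fun h => ?_⟩)
  · simp only [mem_addable, mem_insert, mem_nbr, not_or, not_exists, not_and] at hk ⊢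
    exact ⟨hk.1.2, fun i hi => hk.2 i (Or.inr hi)⟩
  · exact (mem_addable.1 h).1 (mem_insert_self j P)

lemma sum_indepExts_eq_sum_cons (H : SimpleGraph W) (P : Finset W) (f : List W → ℝ) :
    ∑ I ∈ indepExts H P, ∑ l ∈ I.toList.permutations.toFinset, f l
      = f [] + ∑ i ∈ addable H P, ∑ J ∈ indepExts H (insert i P),
          ∑ t ∈ J.toList.permutations.toFinset, f (i :: t) := by
  have hempty : ∅ ∈ indepExts H P := mem_indepExts.2 ⟨empty_subset _, by simp⟩
  rw [← insert_erase hempty, sum_insert (notMem_erase _ _)]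
  congr 1
  · simp
  rw [sum_congr rfl fun I hI => sum_permutations_eq_sum_cons f
      (nonempty_iff_ne_empty.2 (ne_of_mem_erase hI))]
  refine sum_comm' (t' := addable H P) (s' := fun i => (indepExts H (insert i P)).image (insert i))
      (fun I i => ?_) |>.trans (sum_congr rfl fun i _ => ?_)
  · simp only [mem_erase, mem_image]
    constructor
    · rintro ⟨⟨-, hI⟩, hi⟩
      rw [← insert_erase hi, insert_mem_indepExts_iff (notMem_erase i I)] at hI
      exact ⟨⟨I.erase i, hI.2, insert_erase hi⟩, hI.1⟩
    · rintro ⟨⟨J, hJ, rfl⟩, hi⟩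
      have hiJ := notMem_of_mem_indepExts_insert hJ
      exact ⟨⟨insert_ne_empty _ _, (insert_mem_indepExts_iff hiJ).2 ⟨hi, hJ⟩⟩, mem_insert_self _ _⟩
  · rw [sum_image fun J hJ K hK h => ?_]
    · exact sum_congr rfl fun J hJ => by rw [erase_insert (notMem_of_mem_indepExts_insert hJ)]
    · rw [← erase_insert (notMem_of_mem_indepExts_insert hJ), h,
        erase_insert (notMem_of_mem_indepExts_insert hK)]

lemma sumTFrom_eq (H : SimpleGraph W) (w : W → ℝ) (P : Finset W) :
    sumTFrom H w P = 1 + ∑ i ∈ addable H P,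
      w i / slack H w (insert i P) * sumTFrom H w (insert i P) := by
  rw [sumTFrom, sum_indepExts_eq_sum_cons]
  simp only [Tlist, sumTFrom, slack, mul_sum]

lemma sumEFrom_eq (H : SimpleGraph W) (w : W → ℝ) (P : Finset W) :
    sumEFrom H w P = ∑ i ∈ addable H P, w i / slack H w (insert i P) *
      (aSum w (nbr H (insert i P)) / slack H w (insert i P) * sumTFrom H w (insert i P)
        + sumEFrom H w (insert i P)) := by
  rw [sumEFrom, sum_indepExts_eq_sum_cons]
  simp only [Tlist, Erat, sumTFrom, sumEFrom, slack, mul_sum, ← sum_add_distrib, zero_mul, zero_add]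
  exact sum_congr rfl fun i _ => sum_congr rfl fun J _ => sum_congr rfl fun t _ => by ring

lemma addable_empty (H : SimpleGraph W) : addable H ∅ = univ := by
  ext
  simp [mem_addable, mem_nbr]

lemma indepExts_empty (H : SimpleGraph W) : indepExts H ∅ = insert ∅ (indepSets H) := by
  ext I
  rw [mem_insert, mem_indepExts, addable_empty, indepSets, mem_filter, isIndep_iff]
  rcases I.eq_empty_or_nonempty with rfl | hI
  · simp
  · simp [hI, hI.ne_empty]

lemma meanQ_eq (H : SimpleGraph W) (w : W → ℝ) :
    meanQ H w = (sumTFrom H w ∅)⁻¹ * sumEFrom H w ∅ := by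
  have hempty : ∅ ∉ indepSets H := fun h => by simpa using (isIndep_iff.1 (mem_filter.1 h).2).1
  simp [meanQ, sumTFrom, sumEFrom, indepExts_empty, sum_insert hempty, Tlist, Erat, TI, EI]

end States

section Independence

variable {V : Type} [Fintype V] {G : SimpleGraph V}

lemma slack_pos {α : V → ℝ} (hN : Ncond G α) {Q : Finset V} (hQ : Q.Nonempty)
    (hQi : G.IsIndepSet (Q : Set V)) : 0 < slack G α Q :=
  sub_pos.2 <| hN Q <| mem_filter.2 ⟨mem_univ _, isIndep_iff.2 ⟨hQ, hQi⟩⟩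

lemma notMem_nbr_of_isIndepSet {P : Finset V} (hP : G.IsIndepSet (P : Set V)) {i : V}
    (hi : i ∈ P) : i ∉ nbr G P := fun hn =>
  have ⟨_, hk, hki⟩ := mem_nbr.1 hn
  hP hk hi (G.ne_of_adj hki) hki

lemma isIndepSet_insert_of_notMem_nbr [DecidableEq V] {P : Finset V}
    (hP : G.IsIndepSet (P : Set V)) {i : V} (hi : i ∉ nbr G P) :
    G.IsIndepSet (↑(insert i P) : Set V) := by
  rw [coe_insert, SimpleGraph.IsIndepSet, Set.pairwise_insert]
  exact ⟨hP, fun k hk _ =>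
    ⟨fun h => hi (mem_nbr.2 ⟨k, hk, h.symm⟩), fun h => hi (mem_nbr.2 ⟨k, hk, h⟩)⟩⟩

end Independence

lemma div_add_mul_one_add_div_mul {a s c t : ℝ} (hs : 0 < s) (hc : 0 ≤ c) :
    a / (s + c) * ((1 + c / s) * t) = a * (t / s) := by
  field_simp

lemma div_add_mul_one_add_div_mul_add {a s c n t e : ℝ} (hs : 0 < s) (hc : 0 ≤ c) :
    a / (s + c) * (n / (s + c) * ((1 + c / s) * t) + ((1 + c / s) * e + c * n / s ^ 2 * t))
      = a * ((n / s * t + e) / s) := by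
  field_simp
  ring

section Comap

variable {V W : Type} [Fintype W] [DecidableEq V] {f : W → V} {α : V → ℝ} {β : W → ℝ}

lemma sum_filter_mem_mul (hβ : ∀ i, ∑ j with f j = i, β j = α i) (T : Finset V) (g : V → ℝ) :
    ∑ j with f j ∈ T, β j * g (f j) = ∑ i ∈ T, α i * g i := by
  rw [← sum_fiberwise_of_maps_to (t := T) (g := f) fun j hj => (mem_filter.1 hj).2]
  refine sum_congr rfl fun i hi => ?_
  rw [← hβ, sum_mul, filter_filter]
  refine sum_congr (filter_congr fun j _ => ?_) fun j hj => by rw [(mem_filter.1 hj).2]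
  exact and_iff_right_of_imp fun h => h ▸ hi

lemma aSum_filter_mem (hβ : ∀ i, ∑ j with f j = i, β j = α i) (T : Finset V) :
    aSum β (univ.filter fun j => f j ∈ T) = aSum α T := by
  simpa [aSum] using sum_filter_mem_mul hβ T 1

lemma aSum_le_aSum_image (hβ : ∀ i, ∑ j with f j = i, β j = α i) (hβ0 : ∀ j, 0 ≤ β j)
    (S : Finset W) : aSum β S ≤ aSum α (S.image f) := by
  rw [← aSum_filter_mem hβ]
  exact sum_le_sum_of_subset_of_nonneg (fun j hj => by simpa using mem_image_of_mem f hj)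
    fun j _ _ => hβ0 j

variable [Fintype V] {G : SimpleGraph V}

lemma nbr_comap (S : Finset W) :
    nbr (G.comap f) S = univ.filter fun j => f j ∈ nbr G (S.image f) := by
  ext j
  simp [mem_nbr]

lemma aSum_nbr_comap (hβ : ∀ i, ∑ j with f j = i, β j = α i) (S : Finset W) :
    aSum β (nbr (G.comap f) S) = aSum α (nbr G (S.image f)) := by
  rw [nbr_comap, aSum_filter_mem hβ]

lemma slack_comap (hβ : ∀ i, ∑ j with f j = i, β j = α i) (S : Finset W) :
    slack (G.comap f) β S = slack G α (S.image f) + (aSum α (S.image f) - aSum β S) := by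
  rw [slack, slack, aSum_nbr_comap hβ]
  ring

variable [DecidableEq W]

lemma mem_addable_comap {S : Finset W} {j : W} :
    j ∈ addable (G.comap f) S ↔ j ∉ S ∧ f j ∉ nbr G (S.image f) := by
  simp [mem_addable, nbr_comap]

lemma sum_addable_comap (hβ : ∀ i, ∑ j with f j = i, β j = α i) (S : Finset W)
    (hS : G.IsIndepSet (S.image f : Set V)) (F : Finset V → ℝ) :
    ∑ j ∈ addable (G.comap f) S, β j * F (insert (f j) (S.image f))
      = ∑ i ∈ addable G (S.image f), α i * F (insert i (S.image f))
        + (aSum α (S.image f) - aSum β S) * F (S.image f) := by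
  set P := S.image f
  have hSP : S ⊆ univ.filter fun j => f j ∈ P :=
    fun j hj => mem_filter.2 ⟨mem_univ _, mem_image_of_mem f hj⟩
  have hsplit : addable (G.comap f) S
      = (univ.filter fun j => f j ∈ addable G P) ∪ ((univ.filter fun j => f j ∈ P) \ S) := by
    ext j
    have hP : f j ∈ P → f j ∉ nbr G P := notMem_nbr_of_isIndepSet hS
    have hS : j ∈ S → f j ∈ P := mem_image_of_mem f
    rw [mem_addable_comap]
    simp only [mem_union, mem_filter, mem_univ, true_and, mem_addable, mem_sdiff]
    tauto
  have hdisj : Disjoint (univ.filter fun j => f j ∈ addable G P)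
      ((univ.filter fun j => f j ∈ P) \ S) := by
    simp +contextual [disjoint_left, mem_addable]
  rw [hsplit, sum_union hdisj, sum_filter_mem_mul hβ _ fun i => F (insert i P)]
  congr 1
  rw [sum_congr rfl fun j hj => by rw [insert_eq_of_mem (mem_filter.1 (mem_sdiff.1 hj).1).2],
    ← sum_mul, sum_sdiff_eq_sub hSP, ← aSum, ← aSum, aSum_filter_mem hβ]

-- At `S = ∅` the slack is `0` as well, and the factor is `1 + 0 / 0 = 1`.
theorem sumTFrom_comap (hN : Ncond G α) (hβ : ∀ i, ∑ j with f j = i, β j = α i)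
    (hβ0 : ∀ j, 0 ≤ β j) (S : Finset W) (hS : G.IsIndepSet (S.image f : Set V)) :
    sumTFrom (G.comap f) β S
      = (1 + (aSum α (S.image f) - aSum β S) / slack G α (S.image f))
          * sumTFrom G α (S.image f) := by
  have hterm : ∀ j ∈ addable (G.comap f) S,
      β j / slack (G.comap f) β (insert j S) * sumTFrom (G.comap f) β (insert j S)
        = β j * (sumTFrom G α (insert (f j) (S.image f))
            / slack G α (insert (f j) (S.image f))) := by
    intro j hj
    have hQ := isIndepSet_insert_of_notMem_nbr hS (mem_addable_comap.1 hj).2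
    have hc := aSum_le_aSum_image hβ hβ0 (insert j S)
    rw [← image_insert] at hQ
    rw [sumTFrom_comap hN hβ hβ0 (insert j S) hQ, slack_comap hβ]
    rw [image_insert] at hQ hc ⊢
    exact div_add_mul_one_add_div_mul (slack_pos hN (insert_nonempty _ _) hQ) (sub_nonneg.2 hc)
  have hsum : ∑ i ∈ addable G (S.image f),
      α i * (sumTFrom G α (insert i (S.image f)) / slack G α (insert i (S.image f)))
        = sumTFrom G α (S.image f) - 1 := by
    rw [sumTFrom_eq G α (S.image f), add_sub_cancel_left]
    exact sum_congr rfl fun i _ => by ring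
  rw [sumTFrom_eq, sum_congr rfl hterm,
    sum_addable_comap hβ S hS fun Q => sumTFrom G α Q / slack G α Q, hsum]
  ring
termination_by (addable (G.comap f) S).card
decreasing_by exact card_addable_insert_lt hj

theorem sumEFrom_comap (hN : Ncond G α) (hβ : ∀ i, ∑ j with f j = i, β j = α i)
    (hβ0 : ∀ j, 0 ≤ β j) (S : Finset W) (hS : G.IsIndepSet (S.image f : Set V)) :
    sumEFrom (G.comap f) β S
      = (1 + (aSum α (S.image f) - aSum β S) / slack G α (S.image f)) * sumEFrom G α (S.image f)
        + (aSum α (S.image f) - aSum β S) * aSum α (nbr G (S.image f))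
          / slack G α (S.image f) ^ 2 * sumTFrom G α (S.image f) := by
  have hterm : ∀ j ∈ addable (G.comap f) S,
      β j / slack (G.comap f) β (insert j S) *
          (aSum β (nbr (G.comap f) (insert j S)) / slack (G.comap f) β (insert j S)
              * sumTFrom (G.comap f) β (insert j S) + sumEFrom (G.comap f) β (insert j S))
        = β j * ((aSum α (nbr G (insert (f j) (S.image f))) / slack G α (insert (f j) (S.image f))
              * sumTFrom G α (insert (f j) (S.image f)) + sumEFrom G α (insert (f j) (S.image f)))
            / slack G α (insert (f j) (S.image f))) := by
    intro j hj
    have hQ := isIndepSet_insert_of_notMem_nbr hS (mem_addable_comap.1 hj).2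
    have hc := aSum_le_aSum_image hβ hβ0 (insert j S)
    rw [← image_insert] at hQ
    rw [sumTFrom_comap hN hβ hβ0 (insert j S) hQ, sumEFrom_comap hN hβ hβ0 (insert j S) hQ,
      slack_comap hβ, aSum_nbr_comap hβ]
    rw [image_insert] at hQ hc ⊢
    exact div_add_mul_one_add_div_mul_add (slack_pos hN (insert_nonempty _ _) hQ)
      (sub_nonneg.2 hc)
  have hsum : ∑ i ∈ addable G (S.image f), α i *
      ((aSum α (nbr G (insert i (S.image f))) / slack G α (insert i (S.image f))
          * sumTFrom G α (insert i (S.image f)) + sumEFrom G α (insert i (S.image f)))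
        / slack G α (insert i (S.image f))) = sumEFrom G α (S.image f) := by
    rw [sumEFrom_eq G α (S.image f)]
    exact sum_congr rfl fun i _ => by ring
  rw [sumEFrom_eq, sum_congr rfl hterm, sum_addable_comap hβ S hS fun Q =>
    (aSum α (nbr G Q) / slack G α Q * sumTFrom G α Q + sumEFrom G α Q) / slack G α Q, hsum]
  ring
termination_by (addable (G.comap f) S).card
decreasing_by exact card_addable_insert_lt hj

theorem meanQ_comap (hN : Ncond G α) (hβ : ∀ i, ∑ j with f j = i, β j = α i)
    (hβ0 : ∀ j, 0 ≤ β j) : meanQ (G.comap f) β = meanQ G α := by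
  have hS : G.IsIndepSet ((∅ : Finset W).image f : Set V) := by simp
  rw [meanQ_eq, meanQ_eq, sumTFrom_comap hN hβ hβ0 ∅ hS, sumEFrom_comap hN hβ hβ0 ∅ hS]
  simp [aSum]

end Comap

lemma sum_betaArr_fiber {V : Type} [Fintype V] [DecidableEq V] {α : V → ℝ} {x : V} {by_ bz : ℝ}
    (hyz : by_ + bz = α x) (i : V) :
    ∑ j with psiMap x j = i, betaArr α x by_ bz j = α i := by
  rw [sum_filter, Fintype.sum_sum_type, Fintype.sum_eq_single (f := fun v =>
    if psiMap x (Sum.inl v) = i then betaArr α x by_ bz (Sum.inl v) else 0) i fun v hv => if_neg hv]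
  by_cases hi : i = x
  · simp [psiMap, betaArr, hi, hyz]
  · simp [psiMap, betaArr, hi, Ne.symm hi]

theorem stmt15 {V : Type} [Fintype V] [DecidableEq V] (G : SimpleGraph V) (α : V → ℝ)
    (hpos : ∀ i, 0 < α i) (hN : Ncond G α) (x : V) (by_ bz : ℝ)
    (hy : 0 < by_) (hz : 0 < bz) (hyz : by_ + bz = α x) :
    meanQ (Gyz G x) (betaArr α x by_ bz) = meanQ G α := by
  refine meanQ_comap hN (sum_betaArr_fiber hyz) fun j => ?_
  rcases j with v | _
  · by_cases hv : v = x <;> simp [betaArr, hv, hy.le, (hpos v).le]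
  · exact hz.le
end
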